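/- arXiv:1402.2760 — 4 statements merged into one kernel-verified Lean document; each statement's English description precedes it below -/
import Mathlib

section
/- If two distinct positive integers λ₁ and λ₂ are transformed by replacing each bit 0 of their binary representation by the block 0011 and each bit 1 by the block 1100, and then appending the suffix 10, then the resulting binary strings λ₁* and λ₂* are distinct and neither is a prefix of the other. -/
/-- `Φ(0) = 0011`, `Φ(1) = 1100`. -/
def phiBlock (b : Bool) : List Bool :=
  if b then [true, true, false, false] else [false, false, true, true]

/-- The modified label: blocks `Φ(cᵢ)` over the bits of the word, followed by the suffix `10`. -/
def modEnc (w : List Bool) : List Bool :=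
  (w.flatMap phiBlock) ++ [true, false]

/-!
Distinct numbers have distinct binary representations, and the encoding is prefix-free: the two
blocks `0011` and `1100` differ in their first bit, and the terminator `10` agrees with neither
block on its first two bits. Reading two codewords block by block, a prefix relation therefore
forces the underlying words to agree letter by letter.
-/

theorem Nat.bits_injective : Function.Injective Nat.bits := fun m n h =>
  Nat.digits.injective 2 (by rw [Nat.digits_two_eq_bits, Nat.digits_two_eq_bits, h])

lemma modEnc_cons (a : Bool) (w : List Bool) : modEnc (a :: w) = phiBlock a ++ modEnc w := by
  simp [modEnc]

lemma eq_of_modEnc_prefix {v w : List Bool} (h : modEnc v <+: modEnc w) : v = w := by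
  induction v generalizing w with
  | nil =>
    cases w with
    | nil => rfl
    | cons b w => cases b <;> simp [modEnc, phiBlock] at h
  | cons a v ih =>
    cases w with
    | nil => cases a <;> simp [modEnc, phiBlock] at h
    | cons b w =>
      rw [modEnc_cons, modEnc_cons] at h
      obtain rfl : a = b := by cases a <;> cases b <;> simp [phiBlock] at h ⊢
      exact congrArg _ (ih (List.prefix_append_right_inj _ |>.mp h))

theorem modified_labels_distinct_and_prefix_free_general
    (lam1 lam2 : ℕ) (hne : lam1 ≠ lam2) :
    modEnc (Nat.bits lam1) ≠ modEnc (Nat.bits lam2) ∧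
    ¬ modEnc (Nat.bits lam1) <+: modEnc (Nat.bits lam2) ∧
    ¬ modEnc (Nat.bits lam2) <+: modEnc (Nat.bits lam1) := by
  have hbits : Nat.bits lam1 ≠ Nat.bits lam2 := Nat.bits_injective.ne hne
  exact ⟨fun h => hbits (eq_of_modEnc_prefix (h ▸ List.prefix_refl _)),
    fun h => hbits (eq_of_modEnc_prefix h), fun h => hbits (eq_of_modEnc_prefix h).symm⟩

theorem modified_labels_distinct_and_prefix_free
    (lam1 lam2 : ℕ) (h1 : 0 < lam1) (h2 : 0 < lam2) (hne : lam1 ≠ lam2) :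
    modEnc (Nat.bits lam1) ≠ modEnc (Nat.bits lam2) ∧
    ¬ modEnc (Nat.bits lam1) <+: modEnc (Nat.bits lam2) ∧
    ¬ modEnc (Nat.bits lam2) <+: modEnc (Nat.bits lam1) :=
  modified_labels_distinct_and_prefix_free_general lam1 lam2 hne
end

section
/- Consider two agents on an n-vertex oriented ring which, starting simultaneously, each traverse the ring in the same fixed direction: the agent with label λ makes exactly 2nλ unit steps (possibly with arbitrary finite idle pauses inserted between steps by an adversary) and then stops forever. If the two agents have distinct positive integer labels λ₁ < λ₂, then at some point in time they occupy the same vertex. -/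
/-!
Both agents move forward only, so agent `a` sits at `a 0 + stepsBy a t` and agent `b` at
`b 0 + stepsBy b t`. The lead `stepsBy b t - stepsBy a t` of `b` over `a` starts at `0` and
grows by at most one per round; by the time `b` has finished its `2nλ₂` steps, `a` has made
at most `2nλ₁ ≤ 2nλ₂ - 2n` steps, so the lead has reached `2n ≥ n`. Hence it passes through
the residue of `a 0 - b 0` in `[0, n)`, and at that round the agents are on the same vertex.
-/

/-- Number of forward steps made by a token `a` on the oriented ring during the
first `T` rounds. -/
def stepsBy {n : ℕ} (a : ℕ → ZMod n) (T : ℕ) : ℕ :=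
  ((Finset.range T).filter (fun t => a (t + 1) = a t + 1)).card

section Steps

variable {n : ℕ} (a : ℕ → ZMod n)

@[simp]
lemma stepsBy_zero : stepsBy a 0 = 0 := rfl

lemma stepsBy_succ (T : ℕ) :
    stepsBy a (T + 1) = stepsBy a T + if a (T + 1) = a T + 1 then 1 else 0 := by
  unfold stepsBy
  rw [Finset.range_add_one, Finset.filter_insert]
  split
  · rw [Finset.card_insert_of_notMem (by simp)]
  · simp

lemma stepsBy_mono : Monotone (stepsBy a) := fun _ _ hST =>
  Finset.card_le_card (Finset.filter_subset_filter _ (Finset.range_subset_range.2 hST))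

lemma stepsBy_succ_le (T : ℕ) : stepsBy a (T + 1) ≤ stepsBy a T + 1 := by
  rw [stepsBy_succ]
  split <;> omega

lemma eq_add_stepsBy (ha : ∀ t, a (t + 1) = a t ∨ a (t + 1) = a t + 1) (t : ℕ) :
    a t = a 0 + stepsBy a t := by
  induction t with
  | zero => simp
  | succ t ih =>
    rw [stepsBy_succ]
    split
    case isTrue hstep => rw [hstep, ih]; push_cast; ring
    case isFalse hstay => rw [(ha t).resolve_right hstay, ih, add_zero]

end Steps

lemma Int.exists_eq_of_le_succ {f : ℕ → ℤ} (hf : ∀ t, f (t + 1) ≤ f t + 1) {T : ℕ} {m : ℤ}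
    (h0 : f 0 ≤ m) (hT : m ≤ f T) : ∃ t, f t = m := by
  induction T with
  | zero => exact ⟨0, le_antisymm h0 hT⟩
  | succ T ih =>
    by_cases hm : m ≤ f T
    · exact ih hm
    · exact ⟨T + 1, by have := hf T; omega⟩

lemma exists_eq_of_val_sub_add_stepsBy_le_stepsBy {n : ℕ} [NeZero n] {a b : ℕ → ZMod n}
    (ha : ∀ t, a (t + 1) = a t ∨ a (t + 1) = a t + 1)
    (hb : ∀ t, b (t + 1) = b t ∨ b (t + 1) = b t + 1) {T : ℕ}
    (hT : (a 0 - b 0).val + stepsBy a T ≤ stepsBy b T) : ∃ t, a t = b t := by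
  set lead : ℕ → ℤ := fun t => (stepsBy b t : ℤ) - stepsBy a t
  have hlead : ∀ t, lead (t + 1) ≤ lead t + 1 := fun t => by
    have := stepsBy_succ_le b t
    have := stepsBy_mono a (Nat.le_add_right t 1)
    simp only [lead]
    omega
  obtain ⟨t, ht⟩ := Int.exists_eq_of_le_succ hlead (T := T) (m := (a 0 - b 0).val)
    (by simp only [lead, stepsBy_zero]; omega) (by simp only [lead]; omega)
  have hsteps : stepsBy b t = stepsBy a t + (a 0 - b 0).val := by simp only [lead] at ht; omega
  refine ⟨t, ?_⟩
  rw [eq_add_stepsBy a ha, eq_add_stepsBy b hb, hsteps, Nat.cast_add, ZMod.natCast_zmod_val]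
  ring

theorem oriented_ring_rendezvous_general
    (n : ℕ) (hn : 2 ≤ n) (lam1 lam2 : ℕ) (hl : lam1 < lam2)
    (a b : ℕ → ZMod n)
    (ha : ∀ t, a (t + 1) = a t ∨ a (t + 1) = a t + 1)
    (hb : ∀ t, b (t + 1) = b t ∨ b (t + 1) = b t + 1)
    (haLe : ∀ T, stepsBy a T ≤ 2 * n * lam1)
    (hbEq : ∃ T, stepsBy b T = 2 * n * lam2) :
    ∃ t, a t = b t := by
  have : NeZero n := ⟨by omega⟩
  obtain ⟨T, hT⟩ := hbEq
  refine exists_eq_of_val_sub_add_stepsBy_le_stepsBy ha hb (T := T) ?_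
  have hoffset : (a 0 - b 0).val < n := ZMod.val_lt _
  have hgap : 2 * n * lam1 + 2 * n ≤ 2 * n * lam2 := by
    rw [← Nat.mul_succ]; exact Nat.mul_le_mul_left _ hl
  have := haLe T
  omega

/-- Two agents on an oriented `n`-ring, each traversing the ring in the same direction,
where the agent with label `λ` makes exactly `2nλ` unit steps (with arbitrary finite
adversarial pauses) and then stops forever. If `λ₁ < λ₂`, the agents meet at a vertex. -/
theorem oriented_ring_rendezvous
    (n : ℕ) (hn : 2 ≤ n) (lam1 lam2 : ℕ) (h1 : 0 < lam1) (hl : lam1 < lam2)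
    (a b : ℕ → ZMod n)
    (ha : ∀ t, a (t + 1) = a t ∨ a (t + 1) = a t + 1)
    (hb : ∀ t, b (t + 1) = b t ∨ b (t + 1) = b t + 1)
    (haLe : ∀ T, stepsBy a T ≤ 2 * n * lam1)
    (hbLe : ∀ T, stepsBy b T ≤ 2 * n * lam2)
    (haEq : ∃ T, stepsBy a T = 2 * n * lam1)
    (hbEq : ∃ T, stepsBy b T = 2 * n * lam2) :
    ∃ t, a t = b t :=
  oriented_ring_rendezvous_general n hn lam1 lam2 hl a b ha hb haLe hbEq
end

section
/- Define sequences for an agent by t_{k+1} = t_k + p_k + λ(s_{k+1} − s_k) and t'_{k+1} = t'_k + p_k + λ'(s_{k+1} − s_k), where s_k = 2^{k+4}, p_k = 2^{2k+4}, b_k = 3·2^k, and λ > λ' are positive integers. If t'_j < t_j + b_j for some index j, then for all r ≥ j one has t_{r+1} − t'_{r+1} > b_{r+1}. -/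
/-!
The gap `d k = t k - t' k` grows by `(λ - λ') (s_{k+1} - s_k) ≥ s_k` from each phase to the next,
since the phase lengths `p_k` cancel. Hence `d` is nondecreasing, and the last increment alone gives
`d (r+1) ≥ d j + s_r > -b_j + 16·2^r ≥ 13·2^r > b_{r+1}`.
-/

section StageGap

variable {p s t t' : ℕ → ℤ} {lam lam' : ℤ}

theorem sub_succ_eq_of_stage_recurrence
    (ht : ∀ k, t (k + 1) = t k + p k + lam * (s (k + 1) - s k))
    (ht' : ∀ k, t' (k + 1) = t' k + p k + lam' * (s (k + 1) - s k)) (k : ℕ) :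
    t (k + 1) - t' (k + 1) = t k - t' k + (lam - lam') * (s (k + 1) - s k) := by
  rw [ht, ht']
  ring

theorem monotone_sub_of_stage_recurrence (hs : Monotone s) (hll : lam' ≤ lam)
    (ht : ∀ k, t (k + 1) = t k + p k + lam * (s (k + 1) - s k))
    (ht' : ∀ k, t' (k + 1) = t' k + p k + lam' * (s (k + 1) - s k)) :
    Monotone fun k => t k - t' k := by
  refine monotone_nat_of_le_succ fun k => ?_
  have hstep : 0 ≤ (lam - lam') * (s (k + 1) - s k) :=
    mul_nonneg (sub_nonneg.2 hll) (sub_nonneg.2 (hs k.le_succ))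
  simp only [sub_succ_eq_of_stage_recurrence ht ht' k]
  linarith

end StageGap

theorem stage_start_gap_general (lam lam' : ℤ) (hll : lam' < lam)
    (t t' : ℕ → ℤ)
    (ht : ∀ k, t (k + 1) = t k + 2 ^ (2 * k + 4) + lam * (2 ^ (k + 1 + 4) - 2 ^ (k + 4)))
    (ht' : ∀ k, t' (k + 1) = t' k + 2 ^ (2 * k + 4) + lam' * (2 ^ (k + 1 + 4) - 2 ^ (k + 4)))
    (j : ℕ) (hj : t' j < t j + 3 * 2 ^ j) :
    ∀ r, j ≤ r → t (r + 1) - t' (r + 1) > 3 * 2 ^ (r + 1) := by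
  intro r hjr
  let s : ℕ → ℤ := fun k => 2 ^ (k + 4)
  have hs : Monotone s := fun _ _ h => pow_le_pow_right₀ one_le_two (by omega)
  have hmono := monotone_sub_of_stage_recurrence hs hll.le ht ht' hjr
  have hlast := sub_succ_eq_of_stage_recurrence (s := s) ht ht' r
  have hsr : s (r + 1) - s r = 16 * 2 ^ r := by simp only [s]; ring
  have hjr' : (2 : ℤ) ^ j ≤ 2 ^ r := pow_le_pow_right₀ one_le_two hjr
  have hincr : 16 * 2 ^ r ≤ (lam - lam') * (16 * 2 ^ r) :=
    le_mul_of_one_le_left (by positivity) (by linarith)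
  calc t (r + 1) - t' (r + 1) = t r - t' r + (lam - lam') * (16 * 2 ^ r) := by rw [hlast, hsr]
    _ ≥ t j - t' j + 16 * 2 ^ r := add_le_add hmono hincr
    _ > 3 * 2 ^ (r + 1) := by rw [pow_succ]; linarith [pow_pos (two_pos (α := ℤ)) r]

/-- Key recurrence from Claim 1 of the analysis of Algorithm Graph-RV-BF, with
`s_k = 2^(k+4)`, `p_k = 2^(2k+4)`, `b_k = 3·2^k` and labels `λ > λ' > 0`:
if `t'_j < t_j + b_j`, then `t_{r+1} − t'_{r+1} > b_{r+1}` for all `r ≥ j`. -/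
theorem stage_start_gap (lam lam' : ℤ) (h0 : 0 < lam') (hll : lam' < lam)
    (t t' : ℕ → ℤ)
    (ht : ∀ k, t (k + 1) = t k + 2 ^ (2 * k + 4) + lam * (2 ^ (k + 1 + 4) - 2 ^ (k + 4)))
    (ht' : ∀ k, t' (k + 1) = t' k + 2 ^ (2 * k + 4) + lam' * (2 ^ (k + 1 + 4) - 2 ^ (k + 4)))
    (j : ℕ) (hj : t' j < t j + 3 * 2 ^ j) :
    ∀ r, j ≤ r → t (r + 1) - t' (r + 1) > 3 * 2 ^ (r + 1) :=
  stage_start_gap_general lam lam' hll t t' ht ht' j hj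
end

section
/- A basic walk in a tree with n vertices, which leaves the starting vertex by port 0 and, upon entering a vertex of degree d by port i, leaves by port (i+1) mod d, traverses each edge exactly twice (once in each direction) and returns to the starting vertex after exactly 2(n−1) edge traversals. -/
/-!
One step of the walk is the map on darts `(u, v) ↦ (v, ρ_v u)`, where `ρ_v` moves a neighbour
of `v` to the neighbour at the next port; this map is injective. In a tree, the walk entering
`v` along `(u, v)` successively leaves `v` towards each other neighbour `x`, explores the part of
the tree behind `x` (smaller than the part behind `v`, so by induction it comes back along
`(x, v)`), and finally returns along `(v, u)`. Hence every dart lies in the orbit of every other,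
so the walk is periodic with period the number `2(n - 1)` of darts and uses each dart once per
period.
-/

open Function

namespace Equiv

variable {α : Type*} {n : ℕ} (e : α ≃ Fin n)

def finRotateConj : Perm α := e.symm.permCongr (finRotate n)

lemma val_finRotateConj_iterate (a : α) (j : ℕ) :
    (e (e.finRotateConj^[j] a) : ℕ) = ((e a : ℕ) + j) % n := by
  induction j with
  | zero => exact (Nat.mod_eq_of_lt (e a).isLt).symm
  | succ j ih =>
    have : NeZero n := ⟨(e a).pos.ne'⟩
    rw [iterate_succ_apply', finRotateConj, permCongr_apply, symm_symm, apply_symm_apply,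
      finRotate_apply, Fin.val_add, ← finRotateConj, ih, Fin.val_one', Nat.add_mod_mod,
      Nat.mod_add_mod, add_assoc]

lemma finRotateConj_iterate_self (a : α) : e.finRotateConj^[n] a = a := by
  apply e.injective
  ext
  rw [val_finRotateConj_iterate, Nat.add_mod_right, Nat.mod_eq_of_lt (e a).isLt]

lemma exists_finRotateConj_iterate_eq (a b : α) : ∃ j, e.finRotateConj^[j] a = b := by
  refine ⟨(e b : ℕ) + n - e a, e.injective (Fin.ext ?_)⟩
  rw [val_finRotateConj_iterate, show (e a : ℕ) + ((e b : ℕ) + n - e a) = e b + n by omega,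
    Nat.add_mod_right, Nat.mod_eq_of_lt (e b).isLt]

lemma finRotateConj_apply_eq_of_val {a b : α} (h : (e b : ℕ) = ((e a : ℕ) + 1) % n) :
    e.finRotateConj a = b :=
  e.injective (Fin.ext ((e.val_finRotateConj_iterate a 1).trans h.symm))

end Equiv

namespace Function

variable {α : Type*} {f : α → α} {x y : α}

lemma existsUnique_iterate_lt_minimalPeriod (hx : x ∈ periodicPts f) (hy : ∃ n, f^[n] x = y) :
    ∃! k, k < minimalPeriod f x ∧ f^[k] x = y := by
  obtain ⟨n, rfl⟩ := hy
  refine ⟨n % minimalPeriod f x,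
    ⟨Nat.mod_lt _ (minimalPeriod_pos_of_mem_periodicPts hx), iterate_mod_minimalPeriod_eq⟩, ?_⟩
  rintro k ⟨hk, hkn⟩
  exact iterate_injOn_Iio_minimalPeriod hk
    (Nat.mod_lt _ (minimalPeriod_pos_of_mem_periodicPts hx))
    (hkn.trans iterate_mod_minimalPeriod_eq.symm)

lemma minimalPeriod_eq_card_of_forall_exists_iterate_eq [Fintype α] (hx : x ∈ periodicPts f)
    (h : ∀ y, ∃ n, f^[n] x = y) : minimalPeriod f x = Fintype.card α := by
  refine le_antisymm minimalPeriod_le_card ?_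
  have hsurj : Surjective fun k : Fin (minimalPeriod f x) => f^[k] x := fun y =>
    let ⟨k, ⟨hk, hky⟩, _⟩ := existsUnique_iterate_lt_minimalPeriod hx (h y)
    ⟨⟨k, hk⟩, hky⟩
  simpa using Fintype.card_le_of_surjective _ hsurj

end Function

lemma Relation.ReflTransGen.exists_iterate_eq {α : Type*} {f : α → α} {x y : α}
    (h : Relation.ReflTransGen (fun a b => f a = b) x y) : ∃ n, f^[n] x = y := by
  induction h with
  | refl => exact ⟨0, rfl⟩
  | tail _ hbc ih =>
    obtain ⟨n, rfl⟩ := ih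
    exact ⟨n + 1, by rw [iterate_succ_apply', hbc]⟩

namespace SimpleGraph

variable {V : Type*} {G : SimpleGraph V}

def farSide (d : G.Dart) : Set V := {z | ∃ p : G.Walk d.snd z, d.edge ∉ p.edges}

lemma snd_mem_farSide (d : G.Dart) : d.snd ∈ G.farSide d := ⟨.nil, by simp⟩

lemma IsAcyclic.fst_notMem_support (hG : G.IsAcyclic) (d : G.Dart) {z : V} (p : G.Walk d.snd z)
    (hp : d.edge ∉ p.edges) : d.fst ∉ p.support := by
  classical
  intro hmem
  have hbridge := isBridge_iff_forall_walk_mem_edges.mp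
    (isAcyclic_iff_forall_adj_isBridge.mp hG d.adj.symm) (p.takeUntil d.fst hmem)
  rw [Sym2.eq_swap] at hbridge
  exact hp (p.edges_takeUntil_subset_edges hmem hbridge)

lemma IsAcyclic.farSide_ssubset (hG : G.IsAcyclic) {d e : G.Dart} (hde : e.fst = d.snd)
    (hne : e.snd ≠ d.fst) : G.farSide e ⊂ G.farSide d := by
  refine ⟨fun z ⟨p, hp⟩ => ?_, fun hsub => ?_⟩
  · have hv : d.snd ∉ p.support := hde ▸ hG.fst_notMem_support e p hp
    refine ⟨.cons (hde ▸ e.adj) p, ?_⟩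
    rw [Walk.edges_cons, List.mem_cons, not_or]
    refine ⟨fun h => ?_, fun h => hv (p.snd_mem_support_of_mem_edges h)⟩
    rcases Sym2.eq_iff.mp h with ⟨h1, -⟩ | ⟨h2, -⟩
    · exact d.adj.ne h1
    · exact hne h2.symm
  · obtain ⟨p, hp⟩ := hsub (hde ▸ G.snd_mem_farSide d)
    exact hG.fst_notMem_support e p hp p.end_mem_support

variable [G.LocallyFinite] (port : ∀ v, G.neighborSet v ≃ Fin (G.degree v))

def nextDart (d : G.Dart) : G.Dart :=
  G.dartOfNeighborSet d.snd ((port d.snd).finRotateConj ⟨d.fst, d.adj.symm⟩)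

lemma nextDart_injective : Function.Injective (nextDart port) := by
  rintro ⟨⟨u, v⟩, huv⟩ ⟨⟨u', v'⟩, huv'⟩ h
  obtain rfl : v = v' := congrArg (·.fst) h
  obtain rfl : u = u' :=
    congrArg Subtype.val ((port v).finRotateConj.injective (Subtype.ext (congrArg (·.snd) h)))
  rfl

lemma nextDart_symm_dartOfNeighborSet (v : V) (y : G.neighborSet v) :
    nextDart port (G.dartOfNeighborSet v y).symm =
      G.dartOfNeighborSet v ((port v).finRotateConj y) := rfl

local notation "Reaches" => Relation.ReflTransGen (fun a b => nextDart port a = b)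

lemma IsAcyclic.reaches_symm [Finite V] (hG : G.IsAcyclic) (d : G.Dart) : Reaches d d.symm := by
  induction hn : (G.farSide d).ncard using Nat.strong_induction_on generalizing d with
  | _ n ih =>
    set σ := (port d.snd).finRotateConj
    set u : G.neighborSet d.snd := ⟨d.fst, d.adj.symm⟩
    have hrot : ∀ j, Reaches d (G.dartOfNeighborSet d.snd (σ^[j + 1] u)) := by
      intro j
      induction j with
      | zero => exact .single rfl
      | succ j ihj =>
        by_cases hj : σ^[j + 1] u = u
        · -- back at `d.symm`, whose successor is the successor of `d`
          rw [iterate_succ_apply', hj]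
          exact .single rfl
        · have hchild := hG.farSide_ssubset (d := d)
            (e := G.dartOfNeighborSet d.snd (σ^[j + 1] u)) rfl (fun h => hj (Subtype.ext h))
          refine (ihj.trans (ih _ (hn ▸ Set.ncard_lt_ncard hchild) _ rfl)).tail ?_
          rw [nextDart_symm_dartOfNeighborSet, ← iterate_succ_apply' σ]
    have := hrot (G.degree d.snd - 1)
    rwa [Nat.sub_add_cancel (port d.snd u).pos, Equiv.finRotateConj_iterate_self] at this

lemma IsAcyclic.reaches_dartOfNeighborSet [Finite V] (hG : G.IsAcyclic) (v : V)
    (y y' : G.neighborSet v) : Reaches (G.dartOfNeighborSet v y) (G.dartOfNeighborSet v y') := by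
  obtain ⟨j, rfl⟩ := (port v).exists_finRotateConj_iterate_eq y y'
  induction j with
  | zero => exact .refl
  | succ j ih =>
    rw [iterate_succ_apply']
    exact ih.trans ((hG.reaches_symm port _).tail (nextDart_symm_dartOfNeighborSet port v _))

lemma IsTree.reaches [Finite V] (hT : G.IsTree) (d e : G.Dart) : Reaches d e := by
  suffices h : ∀ {a b} (_ : G.Walk a b) (y : G.neighborSet a) (y' : G.neighborSet b),
      Reaches (G.dartOfNeighborSet a y) (G.dartOfNeighborSet b y') from
    .head rfl (h (hT.connected.preconnected d.snd e.fst).some _ ⟨e.snd, e.adj⟩)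
  intro a b p
  induction p with
  | nil => exact hT.isAcyclic.reaches_dartOfNeighborSet port _
  | cons hac _ ih =>
    intro y y'
    exact ((hT.isAcyclic.reaches_dartOfNeighborSet port _ y ⟨_, hac⟩).tail rfl).trans (ih _ y')

end SimpleGraph

open SimpleGraph

theorem basic_walk_euler_tour_general
    {V : Type} [Fintype V]
    (G : SimpleGraph V) [DecidableRel G.Adj] (hT : G.IsTree)
    (port : ∀ v : V, G.neighborSet v ≃ Fin (G.degree v))
    (w : ℕ → V)
    (hadj : ∀ k, G.Adj (w k) (w (k + 1)))
    (hrule : ∀ k, (port (w (k + 1)) ⟨w (k + 2), hadj (k + 1)⟩).val =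
      ((port (w (k + 1)) ⟨w k, (hadj k).symm⟩).val + 1) % G.degree (w (k + 1))) :
    w (2 * (Fintype.card V - 1)) = w 0 ∧
    ∀ u v : V, G.Adj u v →
      ∃! k, k < 2 * (Fintype.card V - 1) ∧ w k = u ∧ w (k + 1) = v := by
  let walkDart (k : ℕ) : G.Dart := ⟨(w k, w (k + 1)), hadj k⟩
  have hwalk : ∀ k, (nextDart port)^[k] (walkDart 0) = walkDart k := by
    intro k
    induction k with
    | zero => rfl
    | succ k ih =>
      rw [iterate_succ_apply', ih]
      exact congrArg (G.dartOfNeighborSet _) (Equiv.finRotateConj_apply_eq_of_val _ (hrule k))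
  have hperiodic := (nextDart_injective port).mem_periodicPts (walkDart 0)
  have hperiod : minimalPeriod (nextDart port) (walkDart 0) = 2 * (Fintype.card V - 1) := by
    rw [minimalPeriod_eq_card_of_forall_exists_iterate_eq hperiodic
      fun e => (hT.reaches port _ e).exists_iterate_eq, dart_card_eq_twice_card_edges,
      ← hT.card_edgeFinset, Nat.add_sub_cancel]
  refine ⟨?_, fun u v huv => ?_⟩
  · have := hwalk (minimalPeriod (nextDart port) (walkDart 0))
    rw [iterate_minimalPeriod, hperiod] at this
    exact congrArg (·.fst) this.symm
  · simpa [← hperiod, hwalk, walkDart, Dart.ext_iff, Prod.ext_iff] using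
      existsUnique_iterate_lt_minimalPeriod hperiodic
        ((hT.reaches port _ ⟨(u, v), huv⟩).exists_iterate_eq)

/-- The basic walk in a port-labeled tree: leaving the start by port 0 and, upon entering
a vertex of degree `d` by port `i`, leaving by port `(i+1) mod d`, traverses each edge
exactly twice (once in each direction) and returns to the start after exactly `2(n−1)`
edge traversals. -/
theorem basic_walk_euler_tour
    {V : Type} [Fintype V] [DecidableEq V]
    (G : SimpleGraph V) [DecidableRel G.Adj] (hT : G.IsTree)
    (port : ∀ v : V, G.neighborSet v ≃ Fin (G.degree v))
    (w : ℕ → V)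
    (hadj : ∀ k, G.Adj (w k) (w (k + 1)))
    (hstart : (port (w 0) ⟨w 1, hadj 0⟩).val = 0)
    (hrule : ∀ k, (port (w (k + 1)) ⟨w (k + 2), hadj (k + 1)⟩).val =
      ((port (w (k + 1)) ⟨w k, (hadj k).symm⟩).val + 1) % G.degree (w (k + 1))) :
    w (2 * (Fintype.card V - 1)) = w 0 ∧
    ∀ u v : V, G.Adj u v →
      ∃! k, k < 2 * (Fintype.card V - 1) ∧ w k = u ∧ w (k + 1) = v :=
  basic_walk_euler_tour_general G hT port w hadj hrule
end
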